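/- Let A1, A2, A3, A4, B1, B2, B3, B4 be pairwise disjoint sets of variables, e a binary variable not contained in any of them, C = A2∪A3∪A4 and D = B2∪B3∪B4, and let P be a strictly positive binary probability distribution over their union together with {e}. Suppose: I(A1∪A2∪A3∪A4, B1∪B2∪B3∪B4 | ∅); I(A1∪A2∪B3∪B4, B1∪B2∪A3∪A4 | e = e'); I(A1∪A3∪B2∪B4, B1∪B3∪A2∪A4 | e = e''), where e' and e'' are the two distinct values of e; and additionally I(A1, e | C ∪ D ∪ B1) holds for P. Then I(A1, A4 | A2 ∪ A3), I(A1, A3 | A2), and I(A1, A2 | ∅) all hold for P. -/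

import Mathlib

open Finset

variable {ι : Type*} [Fintype ι] [DecidableEq ι]

/-- The marginal probability, under the distribution `P` on joint value
assignments of binary variables, of the event that the variables in `S` take
the values given by the assignment `s`. -/
def margin (P : (ι → Bool) → ℝ) (S : Finset ι) (s : ι → Bool) : ℝ :=
  ∑ ω : ι → Bool, if ∀ i ∈ S, ω i = s i then P ω else 0

/-- `I(X, Y | Z)` holds for `P` : conditional independence of `X` and `Y`
given `Z`, stated in the product form `P(X,Y,Z)·P(Z) = P(X,Z)·P(Y,Z)` for all
value assignments, which is equivalent to
`P(X,Y | Z=z) = P(X | Z=z)·P(Y | Z=z)` whenever `P(Z=z) > 0`. -/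
def CondIndep (P : (ι → Bool) → ℝ) (X Y Z : Finset ι) : Prop :=
  ∀ s : ι → Bool,
    margin P (X ∪ Y ∪ Z) s * margin P Z s = margin P (X ∪ Z) s * margin P (Y ∪ Z) s

/-- `I(X, Y | W = w, F)` holds for `P` : conditional independence of `X` and
`Y` given that the variables of `W` are fixed to their values under the
assignment `w` while the variables of `F` range over all their values. -/
def CondIndepPartial (P : (ι → Bool) → ℝ) (X Y : Finset ι)
    (W : Finset ι) (w : ι → Bool) (F : Finset ι) : Prop :=
  ∀ s : ι → Bool, (∀ i ∈ W, s i = w i) →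
    margin P (X ∪ Y ∪ (W ∪ F)) s * margin P (W ∪ F) s =
      margin P (X ∪ (W ∪ F)) s * margin P (Y ∪ (W ∪ F)) s

/-- `I(X, Y | e = b)` holds for `P` : conditional independence of `X` and `Y`
given that the binary variable `e` takes the specific value `b`. -/
def CondIndepGivenVal (P : (ι → Bool) → ℝ) (X Y : Finset ι) (e : ι) (b : Bool) : Prop :=
  ∀ s : ι → Bool, s e = b →
    margin P (X ∪ Y ∪ {e}) s * margin P {e} s =
      margin P (X ∪ {e}) s * margin P (Y ∪ {e}) s

/- ### Auxiliary lemmas about `margin` -/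

lemma margin_def (P : (ι → Bool) → ℝ) (S : Finset ι) (s : ι → Bool) :
    margin P S s = ∑ ω : ι → Bool, if ∀ i ∈ S, ω i = s i then P ω else 0 := rfl

lemma margin_congr (P : (ι → Bool) → ℝ) (S : Finset ι) {s t : ι → Bool}
    (h : ∀ i ∈ S, s i = t i) : margin P S s = margin P S t := by
  refine Finset.sum_congr rfl fun ω _ => ?_
  exact if_congr ⟨fun h' i hi => (h' i hi).trans (h i hi),
    fun h' i hi => (h' i hi).trans (h i hi).symm⟩ rfl rfl

lemma margin_pos (P : (ι → Bool) → ℝ) (hpos : ∀ ω, 0 < P ω) (S : Finset ι) (s : ι → Bool) :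
    0 < margin P S s := by
  unfold margin
  rw [← Finset.sum_filter]
  exact Finset.sum_pos (fun i _ => hpos i)
    ⟨s, Finset.mem_filter.mpr ⟨Finset.mem_univ s, fun i _ => rfl⟩⟩

lemma margin_empty (P : (ι → Bool) → ℝ) (hsum : ∑ ω, P ω = 1) (s : ι → Bool) :
    margin P (∅ : Finset ι) s = 1 := by
  unfold margin; simpa using hsum

lemma margin_univ (P : (ι → Bool) → ℝ) (s : ι → Bool) :
    margin P (Finset.univ : Finset ι) s = P s := by
  unfold margin
  rw [Finset.sum_eq_single s]
  · simp
  · intro ω _ hne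
    rw [if_neg]
    intro h; exact hne (funext fun i => h i (Finset.mem_univ i))
  · simp

lemma count_ext (T : Finset ι) (g : ι → Bool) :
    ((Finset.univ : Finset (ι → Bool)).filter (fun ω => ∀ i ∈ T, ω i = g i)).card
      = 2 ^ Tᶜ.card := by
  have h : ((Finset.univ : Finset (ι → Bool)).filter (fun ω => ∀ i ∈ T, ω i = g i)).card
      = ((Finset.univ : Finset ({i // i ∈ Tᶜ} → Bool))).card := by
    apply Finset.card_nbij' (fun ω => fun x => ω x.1)
      (fun f => fun i => if h : i ∈ Tᶜ then f ⟨i, h⟩ else g i)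
    · intro ω _; exact Finset.mem_univ _
    · intro f _
      simp only [Finset.mem_coe, Finset.mem_filter, Finset.mem_univ, true_and]
      intro i hi
      rw [dif_neg (by simpa using hi)]
    · intro ω hω
      funext i
      beta_reduce
      by_cases h : i ∈ Tᶜ
      · rw [dif_pos h]
      · rw [dif_neg h]
        exact ((Finset.mem_filter.mp (Finset.mem_coe.mp hω)).2 i (by simpa using h)).symm
    · intro f _
      funext x
      simp [x.2]
  rw [h]
  simp [Finset.card_univ, Fintype.card_fun, Finset.card_compl]

lemma sum_sub (S : Finset ι) (s : ι → Bool) {f g : (ι → Bool) → ℝ}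
    (h : ∀ ω, (∀ i ∈ S, ω i = s i) → f ω = g ω) :
    (∑ ω : ι → Bool, if ∀ i ∈ S, ω i = s i then f ω else 0)
      = ∑ ω : ι → Bool, if ∀ i ∈ S, ω i = s i then g ω else 0 := by
  refine Finset.sum_congr rfl fun ω _ => ?_
  by_cases hc : ∀ i ∈ S, ω i = s i
  · rw [if_pos hc, if_pos hc, h ω hc]
  · rw [if_neg hc, if_neg hc]

lemma sum_ite_const_mul (S : Finset ι) (s : ι → Bool) (k : ℝ) (f : (ι → Bool) → ℝ) :
    (∑ ω : ι → Bool, if ∀ i ∈ S, ω i = s i then k * f ω else 0)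
      = k * ∑ ω : ι → Bool, if ∀ i ∈ S, ω i = s i then f ω else 0 := by
  rw [Finset.mul_sum]
  exact Finset.sum_congr rfl fun ω _ => by split <;> simp

lemma margin_marg (P : (ι → Bool) → ℝ) (S U : Finset ι) (s : ι → Bool) :
    (∑ ω : ι → Bool, if ∀ i ∈ S, ω i = s i then margin P U ω else 0)
      = 2 ^ ((S ∪ U)ᶜ.card) * margin P (S ∩ U) s := by
  unfold margin
  have step1 : ∀ ω : ι → Bool,
      (if ∀ i ∈ S, ω i = s i then (∑ ρ : ι → Bool, if ∀ i ∈ U, ρ i = ω i then P ρ else 0) else 0)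
      = ∑ ρ : ι → Bool, if (∀ i ∈ S, ω i = s i) ∧ (∀ i ∈ U, ρ i = ω i) then P ρ else 0 := by
    intro ω
    split_ifs with h
    · exact Finset.sum_congr rfl fun ρ _ => (if_congr (and_iff_right h) rfl rfl).symm
    · exact (Finset.sum_eq_zero fun ρ _ => if_neg fun hc => h hc.1).symm
  rw [Finset.sum_congr rfl fun ω _ => step1 ω, Finset.sum_comm]
  have step2 : ∀ ρ : ι → Bool,
      (∑ ω : ι → Bool, if (∀ i ∈ S, ω i = s i) ∧ (∀ i ∈ U, ρ i = ω i) then P ρ else 0)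
      = (2:ℝ) ^ (S ∪ U)ᶜ.card * (if ∀ i ∈ S ∩ U, ρ i = s i then P ρ else 0) := by
    intro ρ
    rw [← Finset.sum_filter, Finset.sum_const, nsmul_eq_mul]
    by_cases hcons : ∀ i ∈ S ∩ U, ρ i = s i
    · rw [if_pos hcons]
      congr 1
      have hset : (Finset.univ.filter
            (fun ω : ι → Bool => (∀ i ∈ S, ω i = s i) ∧ (∀ i ∈ U, ρ i = ω i)))
          = Finset.univ.filter
            (fun ω : ι → Bool => ∀ i ∈ S ∪ U, ω i = (fun j => if j ∈ S then s j else ρ j) i) := by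
        ext ω
        simp only [Finset.mem_filter, Finset.mem_univ, true_and, Finset.mem_union]
        constructor
        · rintro ⟨h1, h2⟩ i hi
          by_cases hS : i ∈ S
          · simp [hS, h1 i hS]
          · simp [hS, (h2 i (hi.resolve_left hS)).symm]
        · intro h
          constructor
          · intro i hi
            have := h i (Or.inl hi); simpa [hi] using this
          · intro i hi
            have h2 := h i (Or.inr hi)
            by_cases hS : i ∈ S
            · rw [hcons i (Finset.mem_inter.mpr ⟨hS, hi⟩)]
              simpa [hS] using (h i (Or.inl hS)).symm
            · simpa [hS] using h2.symm
      rw [hset, count_ext]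
      push_cast
      ring
    · rw [if_neg hcons, mul_zero]
      push_neg at hcons
      obtain ⟨i, hi, hne⟩ := hcons
      have : (Finset.univ.filter
            (fun ω : ι → Bool => (∀ i ∈ S, ω i = s i) ∧ (∀ i ∈ U, ρ i = ω i))) = ∅ := by
        apply Finset.filter_eq_empty_iff.mpr
        rintro ω - ⟨h1, h2⟩
        exact hne ((h2 i (Finset.mem_inter.mp hi).2).trans (h1 i (Finset.mem_inter.mp hi).1))
      rw [this]
      simp
  rw [Finset.sum_congr rfl fun ρ _ => step2 ρ, ← Finset.mul_sum]

lemma margin_transfer (P : (ι → Bool) → ℝ) (S U U2 : Finset ι) (s : ι → Bool) (k : ℝ)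
    (h : ∀ ω : ι → Bool, (∀ i ∈ S, ω i = s i) → margin P U ω = k * margin P U2 ω) :
    2 ^ ((S ∪ U)ᶜ.card) * margin P (S ∩ U) s
      = k * (2 ^ ((S ∪ U2)ᶜ.card) * margin P (S ∩ U2) s) := by
  rw [← margin_marg, ← margin_marg, ← sum_ite_const_mul]
  exact sum_sub _ _ h

set_option maxHeartbeats 3000000 in
/-- Equations (p2)–(p4) of the paper: with `C = A2∪A3∪A4` and `D = B2∪B3∪B4`,
the three independencies `I1`, `I2`, `I3` together with
`I(A1, e | C ∪ D ∪ B1)` imply that `I(A1, A4 | A2 ∪ A3)`, `I(A1, A3 | A2)` and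
`I(A1, A2 | ∅)` all hold for `P`. -/
theorem indep_within_A
    (A1 A2 A3 A4 B1 B2 B3 B4 : Finset ι) (e : ι)
    (hdisj : List.Pairwise Disjoint [A1, A2, A3, A4, B1, B2, B3, B4, ({e} : Finset ι)])
    (hUniv : A1 ∪ A2 ∪ A3 ∪ A4 ∪ B1 ∪ B2 ∪ B3 ∪ B4 ∪ {e} = Finset.univ)
    (P : (ι → Bool) → ℝ) (hpos : ∀ ω, 0 < P ω) (hsum : ∑ ω, P ω = 1)
    (b : Bool)
    (I1 : CondIndep P (A1 ∪ A2 ∪ A3 ∪ A4) (B1 ∪ B2 ∪ B3 ∪ B4) ∅)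
    (I2 : CondIndepGivenVal P (A1 ∪ A2 ∪ B3 ∪ B4) (B1 ∪ B2 ∪ A3 ∪ A4) e b)
    (I3 : CondIndepGivenVal P (A1 ∪ A3 ∪ B2 ∪ B4) (B1 ∪ B3 ∪ A2 ∪ A4) e (!b))
    (hA1e : CondIndep P A1 {e} ((A2 ∪ A3 ∪ A4) ∪ (B2 ∪ B3 ∪ B4) ∪ B1)) :
    CondIndep P A1 A4 (A2 ∪ A3) ∧ CondIndep P A1 A3 A2 ∧ CondIndep P A1 A2 ∅ := by
  classical
  simp only [List.pairwise_cons, List.mem_cons, List.not_mem_nil, List.mem_singleton,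
    forall_eq_or_imp, forall_eq, List.Pairwise.nil] at hdisj
  obtain ⟨⟨d12, d13, d14, d15, d16, d17, d18, d19⟩, ⟨d23, d24, d25, d26, d27, d28, d29⟩,
    ⟨d34, d35, d36, d37, d38, d39⟩, ⟨d45, d46, d47, d48, d49⟩, ⟨d56, d57, d58, d59⟩,
    ⟨d67, d68, d69⟩, ⟨d78, d79⟩, d89, -⟩ := hdisj
  replace d19 := d19.1
  replace d29 := d29.1
  replace d39 := d39.1
  replace d49 := d49.1
  replace d59 := d59.1
  replace d69 := d69.1
  replace d79 := d79.1
  replace d89 := d89.1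
  have hmem : ∀ i : ι, i ∈ A1 ∨ i ∈ A2 ∨ i ∈ A3 ∨ i ∈ A4 ∨ i ∈ B1 ∨ i ∈ B2 ∨ i ∈ B3
      ∨ i ∈ B4 ∨ i = e := by
    intro i
    have h : i ∈ Finset.univ := Finset.mem_univ i
    rw [← hUniv] at h
    simp [Finset.mem_union, Finset.mem_singleton, or_assoc] at h
    tauto
  have mpos := margin_pos P hpos
  have id1 : (A1 ∪ A2 ∪ B3 ∪ B4 ∪ (B1 ∪ B2 ∪ A3 ∪ A4) ∪ {e} : Finset ι) = Finset.univ := by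
    ext i
    have hm := hmem i
    simp only [Finset.mem_union, Finset.mem_inter, Finset.mem_singleton, Finset.mem_univ,
      Finset.notMem_empty, iff_true, iff_false]
    itauto
  have id2 : (A1 ∪ A3 ∪ B2 ∪ B4 ∪ (B1 ∪ B3 ∪ A2 ∪ A4) ∪ {e} : Finset ι) = Finset.univ := by
    ext i
    have hm := hmem i
    simp only [Finset.mem_union, Finset.mem_inter, Finset.mem_singleton, Finset.mem_univ,
      Finset.notMem_empty, iff_true, iff_false]
    itauto
  have id3 : (A1 ∪ {e} ∪ ((A2 ∪ A3 ∪ A4) ∪ (B2 ∪ B3 ∪ B4) ∪ B1) : Finset ι) = Finset.univ := by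
    ext i
    have hm := hmem i
    simp only [Finset.mem_union, Finset.mem_inter, Finset.mem_singleton, Finset.mem_univ,
      Finset.notMem_empty, iff_true, iff_false]
    itauto
  have id5 : (({e} ∪ ((A2 ∪ A3 ∪ A4) ∪ (B2 ∪ B3 ∪ B4) ∪ B1)) ∩ (A1 ∪ A2 ∪ B3 ∪ B4 ∪ {e}) : Finset ι) = A2 ∪ B3 ∪ B4 ∪ {e} := by
    ext i
    have hf0 : i ∈ A1 → i ∉ A2 := fun hh => Finset.disjoint_left.mp d12 hh
    have hf1 : i ∈ A1 → i ∉ A3 := fun hh => Finset.disjoint_left.mp d13 hh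
    have hf2 : i ∈ A1 → i ∉ A4 := fun hh => Finset.disjoint_left.mp d14 hh
    have hf3 : i ∈ A1 → i ∉ B1 := fun hh => Finset.disjoint_left.mp d15 hh
    have hf4 : i ∈ A1 → i ∉ B2 := fun hh => Finset.disjoint_left.mp d16 hh
    have hf5 : i ∈ A1 → i ∉ B3 := fun hh => Finset.disjoint_left.mp d17 hh
    have hf6 : i ∈ A1 → i ∉ B4 := fun hh => Finset.disjoint_left.mp d18 hh
    have hf7 : i ∈ A1 → ¬ i = e := fun hh => by simpa using Finset.disjoint_left.mp d19 hh
    simp only [Finset.mem_union, Finset.mem_inter, Finset.mem_singleton, Finset.mem_univ,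
      Finset.notMem_empty, iff_true, iff_false]
    itauto
  have id7 : (({e} ∪ ((A2 ∪ A3 ∪ A4) ∪ (B2 ∪ B3 ∪ B4) ∪ B1)) ∩ (A1 ∪ A3 ∪ B2 ∪ B4 ∪ {e}) : Finset ι) = A3 ∪ B2 ∪ B4 ∪ {e} := by
    ext i
    have hf0 : i ∈ A1 → i ∉ A2 := fun hh => Finset.disjoint_left.mp d12 hh
    have hf1 : i ∈ A1 → i ∉ A3 := fun hh => Finset.disjoint_left.mp d13 hh
    have hf2 : i ∈ A1 → i ∉ A4 := fun hh => Finset.disjoint_left.mp d14 hh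
    have hf3 : i ∈ A1 → i ∉ B1 := fun hh => Finset.disjoint_left.mp d15 hh
    have hf4 : i ∈ A1 → i ∉ B2 := fun hh => Finset.disjoint_left.mp d16 hh
    have hf5 : i ∈ A1 → i ∉ B3 := fun hh => Finset.disjoint_left.mp d17 hh
    have hf6 : i ∈ A1 → i ∉ B4 := fun hh => Finset.disjoint_left.mp d18 hh
    have hf7 : i ∈ A1 → ¬ i = e := fun hh => by simpa using Finset.disjoint_left.mp d19 hh
    simp only [Finset.mem_union, Finset.mem_inter, Finset.mem_singleton, Finset.mem_univ,
      Finset.notMem_empty, iff_true, iff_false]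
    itauto
  have id4 : (({e} ∪ ((A2 ∪ A3 ∪ A4) ∪ (B2 ∪ B3 ∪ B4) ∪ B1)) ∪ (A1 ∪ A2 ∪ B3 ∪ B4 ∪ {e}) : Finset ι) = Finset.univ := by
    ext i
    have hm := hmem i
    simp only [Finset.mem_union, Finset.mem_inter, Finset.mem_singleton, Finset.mem_univ,
      Finset.notMem_empty, iff_true, iff_false]
    itauto
  have id6 : (({e} ∪ ((A2 ∪ A3 ∪ A4) ∪ (B2 ∪ B3 ∪ B4) ∪ B1)) ∪ (A1 ∪ A3 ∪ B2 ∪ B4 ∪ {e}) : Finset ι) = Finset.univ := by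
    ext i
    have hm := hmem i
    simp only [Finset.mem_union, Finset.mem_inter, Finset.mem_singleton, Finset.mem_univ,
      Finset.notMem_empty, iff_true, iff_false]
    itauto
  have id8 : ((A1 ∪ ((A2 ∪ A3 ∪ A4) ∪ B4)) ∪ (A1 ∪ ((A2 ∪ A3 ∪ A4) ∪ (B2 ∪ B3 ∪ B4) ∪ B1)) : Finset ι) = A1 ∪ ((A2 ∪ A3 ∪ A4) ∪ (B2 ∪ B3 ∪ B4) ∪ B1) := by
    ext i
    simp only [Finset.mem_union, Finset.mem_inter, Finset.mem_singleton, Finset.mem_univ,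
      Finset.notMem_empty, iff_true, iff_false]
    itauto
  have id9 : ((A1 ∪ ((A2 ∪ A3 ∪ A4) ∪ B4)) ∩ (A1 ∪ ((A2 ∪ A3 ∪ A4) ∪ (B2 ∪ B3 ∪ B4) ∪ B1)) : Finset ι) = A1 ∪ ((A2 ∪ A3 ∪ A4) ∪ B4) := by
    ext i
    simp only [Finset.mem_union, Finset.mem_inter, Finset.mem_singleton, Finset.mem_univ,
      Finset.notMem_empty, iff_true, iff_false]
    itauto
  have id10 : ((A1 ∪ ((A2 ∪ A3 ∪ A4) ∪ B4)) ∪ ((A2 ∪ A3 ∪ A4) ∪ (B2 ∪ B3 ∪ B4) ∪ B1) : Finset ι) = A1 ∪ ((A2 ∪ A3 ∪ A4) ∪ (B2 ∪ B3 ∪ B4) ∪ B1) := by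
    ext i
    simp only [Finset.mem_union, Finset.mem_inter, Finset.mem_singleton, Finset.mem_univ,
      Finset.notMem_empty, iff_true, iff_false]
    itauto
  have id11 : ((A1 ∪ ((A2 ∪ A3 ∪ A4) ∪ B4)) ∩ ((A2 ∪ A3 ∪ A4) ∪ (B2 ∪ B3 ∪ B4) ∪ B1) : Finset ι) = (A2 ∪ A3 ∪ A4) ∪ B4 := by
    ext i
    have hf0 : i ∈ A1 → i ∉ A2 := fun hh => Finset.disjoint_left.mp d12 hh
    have hf1 : i ∈ A1 → i ∉ A3 := fun hh => Finset.disjoint_left.mp d13 hh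
    have hf2 : i ∈ A1 → i ∉ A4 := fun hh => Finset.disjoint_left.mp d14 hh
    have hf3 : i ∈ A1 → i ∉ B1 := fun hh => Finset.disjoint_left.mp d15 hh
    have hf4 : i ∈ A1 → i ∉ B2 := fun hh => Finset.disjoint_left.mp d16 hh
    have hf5 : i ∈ A1 → i ∉ B3 := fun hh => Finset.disjoint_left.mp d17 hh
    have hf6 : i ∈ A1 → i ∉ B4 := fun hh => Finset.disjoint_left.mp d18 hh
    simp only [Finset.mem_union, Finset.mem_inter, Finset.mem_singleton, Finset.mem_univ,
      Finset.notMem_empty, iff_true, iff_false]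
    itauto
  have id12 : (((A2 ∪ A3 ∪ A4) ∪ (B1 ∪ B2 ∪ B3 ∪ B4)) ∪ ((A1 ∪ A2 ∪ A3 ∪ A4) ∪ (B1 ∪ B2 ∪ B3 ∪ B4)) : Finset ι) = (A1 ∪ A2 ∪ A3 ∪ A4) ∪ (B1 ∪ B2 ∪ B3 ∪ B4) := by
    ext i
    simp only [Finset.mem_union, Finset.mem_inter, Finset.mem_singleton, Finset.mem_univ,
      Finset.notMem_empty, iff_true, iff_false]
    itauto
  have id13 : (((A2 ∪ A3 ∪ A4) ∪ (B1 ∪ B2 ∪ B3 ∪ B4)) ∩ ((A1 ∪ A2 ∪ A3 ∪ A4) ∪ (B1 ∪ B2 ∪ B3 ∪ B4)) : Finset ι) = (A2 ∪ A3 ∪ A4) ∪ (B1 ∪ B2 ∪ B3 ∪ B4) := by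
    ext i
    simp only [Finset.mem_union, Finset.mem_inter, Finset.mem_singleton, Finset.mem_univ,
      Finset.notMem_empty, iff_true, iff_false]
    itauto
  have id14 : (((A2 ∪ A3 ∪ A4) ∪ (B1 ∪ B2 ∪ B3 ∪ B4)) ∪ (A1 ∪ A2 ∪ A3 ∪ A4) : Finset ι) = (A1 ∪ A2 ∪ A3 ∪ A4) ∪ (B1 ∪ B2 ∪ B3 ∪ B4) := by
    ext i
    simp only [Finset.mem_union, Finset.mem_inter, Finset.mem_singleton, Finset.mem_univ,
      Finset.notMem_empty, iff_true, iff_false]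
    itauto
  have id15 : (((A2 ∪ A3 ∪ A4) ∪ (B1 ∪ B2 ∪ B3 ∪ B4)) ∩ (A1 ∪ A2 ∪ A3 ∪ A4) : Finset ι) = (A2 ∪ A3 ∪ A4) := by
    ext i
    have hf0 : i ∈ A1 → i ∉ B1 := fun hh => Finset.disjoint_left.mp d15 hh
    have hf1 : i ∈ A1 → i ∉ B2 := fun hh => Finset.disjoint_left.mp d16 hh
    have hf2 : i ∈ A1 → i ∉ B3 := fun hh => Finset.disjoint_left.mp d17 hh
    have hf3 : i ∈ A1 → i ∉ B4 := fun hh => Finset.disjoint_left.mp d18 hh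
    have hf4 : i ∈ A2 → i ∉ B1 := fun hh => Finset.disjoint_left.mp d25 hh
    have hf5 : i ∈ A2 → i ∉ B2 := fun hh => Finset.disjoint_left.mp d26 hh
    have hf6 : i ∈ A2 → i ∉ B3 := fun hh => Finset.disjoint_left.mp d27 hh
    have hf7 : i ∈ A2 → i ∉ B4 := fun hh => Finset.disjoint_left.mp d28 hh
    have hf8 : i ∈ A3 → i ∉ B1 := fun hh => Finset.disjoint_left.mp d35 hh
    have hf9 : i ∈ A3 → i ∉ B2 := fun hh => Finset.disjoint_left.mp d36 hh
    have hf10 : i ∈ A3 → i ∉ B3 := fun hh => Finset.disjoint_left.mp d37 hh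
    have hf11 : i ∈ A3 → i ∉ B4 := fun hh => Finset.disjoint_left.mp d38 hh
    have hf12 : i ∈ A4 → i ∉ B1 := fun hh => Finset.disjoint_left.mp d45 hh
    have hf13 : i ∈ A4 → i ∉ B2 := fun hh => Finset.disjoint_left.mp d46 hh
    have hf14 : i ∈ A4 → i ∉ B3 := fun hh => Finset.disjoint_left.mp d47 hh
    have hf15 : i ∈ A4 → i ∉ B4 := fun hh => Finset.disjoint_left.mp d48 hh
    simp only [Finset.mem_union, Finset.mem_inter, Finset.mem_singleton, Finset.mem_univ,
      Finset.notMem_empty, iff_true, iff_false]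
    itauto
  have id16 : ((((A2 ∪ A3 ∪ A4) ∪ B4)) ∪ ((A2 ∪ A3 ∪ A4) ∪ (B1 ∪ B2 ∪ B3 ∪ B4)) : Finset ι) = (A2 ∪ A3 ∪ A4) ∪ (B1 ∪ B2 ∪ B3 ∪ B4) := by
    ext i
    simp only [Finset.mem_union, Finset.mem_inter, Finset.mem_singleton, Finset.mem_univ,
      Finset.notMem_empty, iff_true, iff_false]
    itauto
  have id17 : ((((A2 ∪ A3 ∪ A4) ∪ B4)) ∩ ((A2 ∪ A3 ∪ A4) ∪ (B1 ∪ B2 ∪ B3 ∪ B4)) : Finset ι) = (A2 ∪ A3 ∪ A4) ∪ B4 := by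
    ext i
    simp only [Finset.mem_union, Finset.mem_inter, Finset.mem_singleton, Finset.mem_univ,
      Finset.notMem_empty, iff_true, iff_false]
    itauto
  have id18 : ((((A2 ∪ A3 ∪ A4) ∪ B4)) ∪ (B1 ∪ B2 ∪ B3 ∪ B4) : Finset ι) = (A2 ∪ A3 ∪ A4) ∪ (B1 ∪ B2 ∪ B3 ∪ B4) := by
    ext i
    simp only [Finset.mem_union, Finset.mem_inter, Finset.mem_singleton, Finset.mem_univ,
      Finset.notMem_empty, iff_true, iff_false]
    itauto
  have id19 : ((((A2 ∪ A3 ∪ A4) ∪ B4)) ∩ (B1 ∪ B2 ∪ B3 ∪ B4) : Finset ι) = B4 := by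
    ext i
    have hf0 : i ∈ A2 → i ∉ B1 := fun hh => Finset.disjoint_left.mp d25 hh
    have hf1 : i ∈ A2 → i ∉ B2 := fun hh => Finset.disjoint_left.mp d26 hh
    have hf2 : i ∈ A2 → i ∉ B3 := fun hh => Finset.disjoint_left.mp d27 hh
    have hf3 : i ∈ A2 → i ∉ B4 := fun hh => Finset.disjoint_left.mp d28 hh
    have hf4 : i ∈ A3 → i ∉ B1 := fun hh => Finset.disjoint_left.mp d35 hh
    have hf5 : i ∈ A3 → i ∉ B2 := fun hh => Finset.disjoint_left.mp d36 hh
    have hf6 : i ∈ A3 → i ∉ B3 := fun hh => Finset.disjoint_left.mp d37 hh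
    have hf7 : i ∈ A3 → i ∉ B4 := fun hh => Finset.disjoint_left.mp d38 hh
    have hf8 : i ∈ A4 → i ∉ B1 := fun hh => Finset.disjoint_left.mp d45 hh
    have hf9 : i ∈ A4 → i ∉ B2 := fun hh => Finset.disjoint_left.mp d46 hh
    have hf10 : i ∈ A4 → i ∉ B3 := fun hh => Finset.disjoint_left.mp d47 hh
    have hf11 : i ∈ A4 → i ∉ B4 := fun hh => Finset.disjoint_left.mp d48 hh
    simp only [Finset.mem_union, Finset.mem_inter, Finset.mem_singleton, Finset.mem_univ,
      Finset.notMem_empty, iff_true, iff_false]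
    itauto
  have id20 : ((A1 ∪ (A2 ∪ A3 ∪ A4)) ∪ (A1 ∪ ((A2 ∪ A3 ∪ A4) ∪ B4)) : Finset ι) = A1 ∪ ((A2 ∪ A3 ∪ A4) ∪ B4) := by
    ext i
    simp only [Finset.mem_union, Finset.mem_inter, Finset.mem_singleton, Finset.mem_univ,
      Finset.notMem_empty, iff_true, iff_false]
    itauto
  have id21 : ((A1 ∪ (A2 ∪ A3 ∪ A4)) ∩ (A1 ∪ ((A2 ∪ A3 ∪ A4) ∪ B4)) : Finset ι) = A1 ∪ (A2 ∪ A3 ∪ A4) := by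
    ext i
    simp only [Finset.mem_union, Finset.mem_inter, Finset.mem_singleton, Finset.mem_univ,
      Finset.notMem_empty, iff_true, iff_false]
    itauto
  have id22 : (A1 ∪ (A1 ∪ (A2 ∪ A3 ∪ A4)) : Finset ι) = A1 ∪ (A2 ∪ A3 ∪ A4) := by
    ext i
    simp only [Finset.mem_union, Finset.mem_inter, Finset.mem_singleton, Finset.mem_univ,
      Finset.notMem_empty, iff_true, iff_false]
    itauto
  have id23 : (A1 ∩ (A1 ∪ (A2 ∪ A3 ∪ A4)) : Finset ι) = A1 := by
    ext i
    simp only [Finset.mem_union, Finset.mem_inter, Finset.mem_singleton, Finset.mem_univ,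
      Finset.notMem_empty, iff_true, iff_false]
    itauto
  have id24 : (A1 ∩ (A2 ∪ A3 ∪ A4) : Finset ι) = (∅ : Finset ι) := by
    ext i
    have hf0 : i ∈ A1 → i ∉ A2 := fun hh => Finset.disjoint_left.mp d12 hh
    have hf1 : i ∈ A1 → i ∉ A3 := fun hh => Finset.disjoint_left.mp d13 hh
    have hf2 : i ∈ A1 → i ∉ A4 := fun hh => Finset.disjoint_left.mp d14 hh
    simp only [Finset.mem_union, Finset.mem_inter, Finset.mem_singleton, Finset.mem_univ,
      Finset.notMem_empty, iff_true, iff_false]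
    itauto
  have idg1 : (A1 ∪ A4 ∪ (A2 ∪ A3) : Finset ι) = A1 ∪ (A2 ∪ A3 ∪ A4) := by
    ext i
    simp only [Finset.mem_union, Finset.mem_inter, Finset.mem_singleton, Finset.mem_univ,
      Finset.notMem_empty, iff_true, iff_false]
    itauto
  have idg2 : (A4 ∪ (A2 ∪ A3) : Finset ι) = A2 ∪ A3 ∪ A4 := by
    ext i
    simp only [Finset.mem_union, Finset.mem_inter, Finset.mem_singleton, Finset.mem_univ,
      Finset.notMem_empty, iff_true, iff_false]
    itauto
  have idg3 : (A1 ∪ A3 ∪ A2 : Finset ι) = A1 ∪ (A2 ∪ A3) := by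
    ext i
    simp only [Finset.mem_union, Finset.mem_inter, Finset.mem_singleton, Finset.mem_univ,
      Finset.notMem_empty, iff_true, iff_false]
    itauto
  have idg4 : (A3 ∪ A2 : Finset ι) = A2 ∪ A3 := by
    ext i
    simp only [Finset.mem_union, Finset.mem_inter, Finset.mem_singleton, Finset.mem_univ,
      Finset.notMem_empty, iff_true, iff_false]
    itauto
  have sube : ({e} : Finset ι) ⊆ {e} ∪ ((A2 ∪ A3 ∪ A4) ∪ (B2 ∪ B3 ∪ B4) ∪ B1) := by
    intro i hi
    simp only [Finset.mem_union, Finset.mem_singleton] at hi ⊢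
    itauto
  have sub1 : (B1 ∪ B2 ∪ A3 ∪ A4 ∪ {e} : Finset ι) ⊆ {e} ∪ ((A2 ∪ A3 ∪ A4) ∪ (B2 ∪ B3 ∪ B4) ∪ B1) := by
    intro i hi
    simp only [Finset.mem_union, Finset.mem_singleton] at hi ⊢
    itauto
  have sub2 : (B1 ∪ B3 ∪ A2 ∪ A4 ∪ {e} : Finset ι) ⊆ {e} ∪ ((A2 ∪ A3 ∪ A4) ∪ (B2 ∪ B3 ∪ B4) ∪ B1) := by
    intro i hi
    simp only [Finset.mem_union, Finset.mem_singleton] at hi ⊢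
    itauto
  have sub3 : (A1 ∪ B4 : Finset ι) ⊆ A1 ∪ ((A2 ∪ A3 ∪ A4) ∪ B4) := by
    intro i hi
    simp only [Finset.mem_union, Finset.mem_singleton] at hi ⊢
    itauto
  have subG1 : (A2 ∪ B3 ∪ B4 : Finset ι) ⊆ A1 ∪ A2 ∪ B3 ∪ B4 := by
    intro i hi
    simp only [Finset.mem_union, Finset.mem_singleton] at hi ⊢
    itauto
  have subG2 : (A3 ∪ B2 ∪ B4 : Finset ι) ⊆ A1 ∪ A3 ∪ B2 ∪ B4 := by
    intro i hi
    simp only [Finset.mem_union, Finset.mem_singleton] at hi ⊢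
    itauto
  have hQ1ne : ∀ i ∈ (A1 ∪ ((A2 ∪ A3 ∪ A4) ∪ (B2 ∪ B3 ∪ B4) ∪ B1) : Finset ι), ¬ i = e := by
    intro i hi
    have hf0 : i ∈ A1 → ¬ i = e := fun hh => by simpa using Finset.disjoint_left.mp d19 hh
    have hf1 : i ∈ A2 → ¬ i = e := fun hh => by simpa using Finset.disjoint_left.mp d29 hh
    have hf2 : i ∈ A3 → ¬ i = e := fun hh => by simpa using Finset.disjoint_left.mp d39 hh
    have hf3 : i ∈ A4 → ¬ i = e := fun hh => by simpa using Finset.disjoint_left.mp d49 hh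
    have hf4 : i ∈ B1 → ¬ i = e := fun hh => by simpa using Finset.disjoint_left.mp d59 hh
    have hf5 : i ∈ B2 → ¬ i = e := fun hh => by simpa using Finset.disjoint_left.mp d69 hh
    have hf6 : i ∈ B3 → ¬ i = e := fun hh => by simpa using Finset.disjoint_left.mp d79 hh
    have hf7 : i ∈ B4 → ¬ i = e := fun hh => by simpa using Finset.disjoint_left.mp d89 hh
    simp only [Finset.mem_union] at hi
    itauto
  have hRRne : ∀ i ∈ ((A2 ∪ A3 ∪ A4) ∪ (B2 ∪ B3 ∪ B4) ∪ B1 : Finset ι), ¬ i = e :=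
    fun i hi => hQ1ne i (Finset.mem_union_right _ hi)
  have hX1ne : ∀ i ∈ (A1 ∪ A2 ∪ B3 ∪ B4 : Finset ι), ¬ i = e := by
    intro i hi
    have hf0 : i ∈ A1 → ¬ i = e := fun hh => by simpa using Finset.disjoint_left.mp d19 hh
    have hf1 : i ∈ A2 → ¬ i = e := fun hh => by simpa using Finset.disjoint_left.mp d29 hh
    have hf2 : i ∈ B3 → ¬ i = e := fun hh => by simpa using Finset.disjoint_left.mp d79 hh
    have hf3 : i ∈ B4 → ¬ i = e := fun hh => by simpa using Finset.disjoint_left.mp d89 hh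
    simp only [Finset.mem_union] at hi
    itauto
  have hX2ne : ∀ i ∈ (A1 ∪ A3 ∪ B2 ∪ B4 : Finset ι), ¬ i = e := by
    intro i hi
    have hf0 : i ∈ A1 → ¬ i = e := fun hh => by simpa using Finset.disjoint_left.mp d19 hh
    have hf1 : i ∈ A3 → ¬ i = e := fun hh => by simpa using Finset.disjoint_left.mp d39 hh
    have hf2 : i ∈ B2 → ¬ i = e := fun hh => by simpa using Finset.disjoint_left.mp d69 hh
    have hf3 : i ∈ B4 → ¬ i = e := fun hh => by simpa using Finset.disjoint_left.mp d89 hh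
    simp only [Finset.mem_union] at hi
    itauto
  have hnotC : ∀ i ∈ (A1 ∪ B4 : Finset ι), i ∉ (A2 ∪ A3 ∪ A4 : Finset ι) := by
    intro i hi
    have hf0 : i ∈ A1 → i ∉ A2 := fun hh => Finset.disjoint_left.mp d12 hh
    have hf1 : i ∈ A1 → i ∉ A3 := fun hh => Finset.disjoint_left.mp d13 hh
    have hf2 : i ∈ A1 → i ∉ A4 := fun hh => Finset.disjoint_left.mp d14 hh
    have hf3 : i ∈ B4 → i ∉ A2 := fun hh => Finset.disjoint_right.mp d28 hh
    have hf4 : i ∈ B4 → i ∉ A3 := fun hh => Finset.disjoint_right.mp d38 hh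
    have hf5 : i ∈ B4 → i ∉ A4 := fun hh => Finset.disjoint_right.mp d48 hh
    simp only [Finset.mem_union] at hi ⊢
    itauto
  set u : (ι → Bool) → ℝ := fun t => margin P (A1 ∪ ((A2 ∪ A3 ∪ A4) ∪ (B2 ∪ B3 ∪ B4) ∪ B1)) t / margin P ((A2 ∪ A3 ∪ A4) ∪ (B2 ∪ B3 ∪ B4) ∪ B1) t with hu_def
  have hueq : ∀ t, u t * margin P ((A2 ∪ A3 ∪ A4) ∪ (B2 ∪ B3 ∪ B4) ∪ B1) t = margin P (A1 ∪ ((A2 ∪ A3 ∪ A4) ∪ (B2 ∪ B3 ∪ B4) ∪ B1)) t := by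
    intro t
    simp only [hu_def]
    exact div_mul_cancel₀ _ (mpos _ _).ne'
  have hSB : ∀ s : ι → Bool, s e = b →
      margin P ({e} ∪ ((A2 ∪ A3 ∪ A4) ∪ (B2 ∪ B3 ∪ B4) ∪ B1)) s
        = (margin P (B1 ∪ B2 ∪ A3 ∪ A4 ∪ {e}) s / margin P {e} s) * margin P (A2 ∪ B3 ∪ B4 ∪ {e}) s := by
    intro s hb
    have h := margin_transfer P ({e} ∪ ((A2 ∪ A3 ∪ A4) ∪ (B2 ∪ B3 ∪ B4) ∪ B1)) Finset.univ (A1 ∪ A2 ∪ B3 ∪ B4 ∪ {e}) s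
        (margin P (B1 ∪ B2 ∪ A3 ∪ A4 ∪ {e}) s / margin P {e} s) ?_
    · have hu1 : ({e} ∪ ((A2 ∪ A3 ∪ A4) ∪ (B2 ∪ B3 ∪ B4) ∪ B1) : Finset ι) ∪ Finset.univ
          = Finset.univ := Finset.union_eq_right.mpr (Finset.subset_univ _)
      have hu2 : ({e} ∪ ((A2 ∪ A3 ∪ A4) ∪ (B2 ∪ B3 ∪ B4) ∪ B1) : Finset ι) ∩ Finset.univ
          = {e} ∪ ((A2 ∪ A3 ∪ A4) ∪ (B2 ∪ B3 ∪ B4) ∪ B1) :=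
        Finset.inter_eq_left.mpr (Finset.subset_univ _)
      rw [hu1, hu2, Finset.compl_univ, Finset.card_empty,
        pow_zero, one_mul, id4, id5, Finset.compl_univ, Finset.card_empty, pow_zero,
        one_mul] at h
      exact h
    · intro ω hω
      have hωe : ω e = b := by
        rw [hω e (Finset.mem_union_left _ (Finset.mem_singleton_self e))]; exact hb
      have h2 := I2 ω hωe
      rw [id1, margin_univ] at h2
      rw [margin_univ]
      have hc1 : margin P (B1 ∪ B2 ∪ A3 ∪ A4 ∪ {e}) ω = margin P (B1 ∪ B2 ∪ A3 ∪ A4 ∪ {e}) s :=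
        margin_congr _ _ (fun i hi => hω i (sub1 hi))
      have hc2 : margin P ({e} : Finset ι) ω = margin P {e} s :=
        margin_congr _ _ (fun i hi => hω i (sube hi))
      rw [div_mul_eq_mul_div, eq_div_iff (mpos {e} s).ne', ← hc1, ← hc2]
      linear_combination h2
  have hSB' : ∀ s : ι → Bool, s e = !b →
      margin P ({e} ∪ ((A2 ∪ A3 ∪ A4) ∪ (B2 ∪ B3 ∪ B4) ∪ B1)) s
        = (margin P (B1 ∪ B3 ∪ A2 ∪ A4 ∪ {e}) s / margin P {e} s) * margin P (A3 ∪ B2 ∪ B4 ∪ {e}) s := by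
    intro s hb
    have h := margin_transfer P ({e} ∪ ((A2 ∪ A3 ∪ A4) ∪ (B2 ∪ B3 ∪ B4) ∪ B1)) Finset.univ (A1 ∪ A3 ∪ B2 ∪ B4 ∪ {e}) s
        (margin P (B1 ∪ B3 ∪ A2 ∪ A4 ∪ {e}) s / margin P {e} s) ?_
    · have hu1 : ({e} ∪ ((A2 ∪ A3 ∪ A4) ∪ (B2 ∪ B3 ∪ B4) ∪ B1) : Finset ι) ∪ Finset.univ
          = Finset.univ := Finset.union_eq_right.mpr (Finset.subset_univ _)
      have hu2 : ({e} ∪ ((A2 ∪ A3 ∪ A4) ∪ (B2 ∪ B3 ∪ B4) ∪ B1) : Finset ι) ∩ Finset.univ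
          = {e} ∪ ((A2 ∪ A3 ∪ A4) ∪ (B2 ∪ B3 ∪ B4) ∪ B1) :=
        Finset.inter_eq_left.mpr (Finset.subset_univ _)
      rw [hu1, hu2, Finset.compl_univ, Finset.card_empty,
        pow_zero, one_mul, id6, id7, Finset.compl_univ, Finset.card_empty, pow_zero,
        one_mul] at h
      exact h
    · intro ω hω
      have hωe : ω e = !b := by
        rw [hω e (Finset.mem_union_left _ (Finset.mem_singleton_self e))]; exact hb
      have h2 := I3 ω hωe
      rw [id2, margin_univ] at h2
      rw [margin_univ]
      have hc1 : margin P (B1 ∪ B3 ∪ A2 ∪ A4 ∪ {e}) ω = margin P (B1 ∪ B3 ∪ A2 ∪ A4 ∪ {e}) s :=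
        margin_congr _ _ (fun i hi => hω i (sub2 hi))
      have hc2 : margin P ({e} : Finset ι) ω = margin P {e} s :=
        margin_congr _ _ (fun i hi => hω i (sube hi))
      rw [div_mul_eq_mul_div, eq_div_iff (mpos {e} s).ne', ← hc1, ← hc2]
      linear_combination h2
  have hub : ∀ s : ι → Bool, s e = b →
      u s = margin P (A1 ∪ A2 ∪ B3 ∪ B4 ∪ {e}) s / margin P (A2 ∪ B3 ∪ B4 ∪ {e}) s := by
    intro s hb
    have h1 := hA1e s
    rw [id3, margin_univ] at h1
    have h2 := I2 s hb
    rw [id1, margin_univ] at h2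
    have h3 : margin P ({e} ∪ ((A2 ∪ A3 ∪ A4) ∪ (B2 ∪ B3 ∪ B4) ∪ B1)) s * margin P {e} s
        = margin P (B1 ∪ B2 ∪ A3 ∪ A4 ∪ {e}) s * margin P (A2 ∪ B3 ∪ B4 ∪ {e}) s := by
      rw [hSB s hb]
      field_simp [(mpos ({e} : Finset ι) s).ne']
    simp only [hu_def]
    rw [div_eq_div_iff (mpos _ _).ne' (mpos _ _).ne']
    have key : (margin P (A1 ∪ ((A2 ∪ A3 ∪ A4) ∪ (B2 ∪ B3 ∪ B4) ∪ B1)) s * margin P (A2 ∪ B3 ∪ B4 ∪ {e}) s)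
          * (margin P ({e} ∪ ((A2 ∪ A3 ∪ A4) ∪ (B2 ∪ B3 ∪ B4) ∪ B1)) s * margin P {e} s)
        = (margin P (A1 ∪ A2 ∪ B3 ∪ B4 ∪ {e}) s * margin P ((A2 ∪ A3 ∪ A4) ∪ (B2 ∪ B3 ∪ B4) ∪ B1) s)
          * (margin P ({e} ∪ ((A2 ∪ A3 ∪ A4) ∪ (B2 ∪ B3 ∪ B4) ∪ B1)) s * margin P {e} s) := by
      linear_combination (-(margin P (A2 ∪ B3 ∪ B4 ∪ {e}) s * margin P {e} s)) * h1
        + (margin P ((A2 ∪ A3 ∪ A4) ∪ (B2 ∪ B3 ∪ B4) ∪ B1) s * margin P (A2 ∪ B3 ∪ B4 ∪ {e}) s) * h2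
        + (-(margin P (A1 ∪ A2 ∪ B3 ∪ B4 ∪ {e}) s * margin P ((A2 ∪ A3 ∪ A4) ∪ (B2 ∪ B3 ∪ B4) ∪ B1) s)) * h3
    exact mul_right_cancel₀ (mul_pos (mpos _ _) (mpos _ _)).ne' key
  have hub' : ∀ s : ι → Bool, s e = !b →
      u s = margin P (A1 ∪ A3 ∪ B2 ∪ B4 ∪ {e}) s / margin P (A3 ∪ B2 ∪ B4 ∪ {e}) s := by
    intro s hb
    have h1 := hA1e s
    rw [id3, margin_univ] at h1
    have h2 := I3 s hb
    rw [id2, margin_univ] at h2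
    have h3 : margin P ({e} ∪ ((A2 ∪ A3 ∪ A4) ∪ (B2 ∪ B3 ∪ B4) ∪ B1)) s * margin P {e} s
        = margin P (B1 ∪ B3 ∪ A2 ∪ A4 ∪ {e}) s * margin P (A3 ∪ B2 ∪ B4 ∪ {e}) s := by
      rw [hSB' s hb]
      field_simp [(mpos ({e} : Finset ι) s).ne']
    simp only [hu_def]
    rw [div_eq_div_iff (mpos _ _).ne' (mpos _ _).ne']
    have key : (margin P (A1 ∪ ((A2 ∪ A3 ∪ A4) ∪ (B2 ∪ B3 ∪ B4) ∪ B1)) s * margin P (A3 ∪ B2 ∪ B4 ∪ {e}) s)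
          * (margin P ({e} ∪ ((A2 ∪ A3 ∪ A4) ∪ (B2 ∪ B3 ∪ B4) ∪ B1)) s * margin P {e} s)
        = (margin P (A1 ∪ A3 ∪ B2 ∪ B4 ∪ {e}) s * margin P ((A2 ∪ A3 ∪ A4) ∪ (B2 ∪ B3 ∪ B4) ∪ B1) s)
          * (margin P ({e} ∪ ((A2 ∪ A3 ∪ A4) ∪ (B2 ∪ B3 ∪ B4) ∪ B1)) s * margin P {e} s) := by
      linear_combination (-(margin P (A3 ∪ B2 ∪ B4 ∪ {e}) s * margin P {e} s)) * h1
        + (margin P ((A2 ∪ A3 ∪ A4) ∪ (B2 ∪ B3 ∪ B4) ∪ B1) s * margin P (A3 ∪ B2 ∪ B4 ∪ {e}) s) * h2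
        + (-(margin P (A1 ∪ A3 ∪ B2 ∪ B4 ∪ {e}) s * margin P ((A2 ∪ A3 ∪ A4) ∪ (B2 ∪ B3 ∪ B4) ∪ B1) s)) * h3
    exact mul_right_cancel₀ (mul_pos (mpos _ _) (mpos _ _)).ne' key
  have claim1 : ∀ p q : ι → Bool, (∀ i ∈ (A1 ∪ A2 ∪ B3 ∪ B4 : Finset ι), p i = q i) → u p = u q := by
    intro p q hpq
    have hp : u p = u (Function.update p e b) := by
      simp only [hu_def]
      rw [margin_congr P (A1 ∪ ((A2 ∪ A3 ∪ A4) ∪ (B2 ∪ B3 ∪ B4) ∪ B1)) (fun i hi => (Function.update_of_ne (hQ1ne i hi) b p).symm),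
        margin_congr P ((A2 ∪ A3 ∪ A4) ∪ (B2 ∪ B3 ∪ B4) ∪ B1) (fun i hi => (Function.update_of_ne (hRRne i hi) b p).symm)]
    have hq : u q = u (Function.update q e b) := by
      simp only [hu_def]
      rw [margin_congr P (A1 ∪ ((A2 ∪ A3 ∪ A4) ∪ (B2 ∪ B3 ∪ B4) ∪ B1)) (fun i hi => (Function.update_of_ne (hQ1ne i hi) b q).symm),
        margin_congr P ((A2 ∪ A3 ∪ A4) ∪ (B2 ∪ B3 ∪ B4) ∪ B1) (fun i hi => (Function.update_of_ne (hRRne i hi) b q).symm)]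
    rw [hp, hq, hub _ (Function.update_self e b p),
      hub _ (Function.update_self e b q)]
    have c1 : margin P (A1 ∪ A2 ∪ B3 ∪ B4 ∪ {e}) (Function.update p e b)
        = margin P (A1 ∪ A2 ∪ B3 ∪ B4 ∪ {e}) (Function.update q e b) := by
      apply margin_congr
      intro i hi
      rcases Finset.mem_union.mp hi with hX | hE
      · have hne : i ≠ e := hX1ne i hX
        rw [Function.update_of_ne hne, Function.update_of_ne hne]
        exact hpq i hX
      · rw [Finset.mem_singleton.mp hE, Function.update_self, Function.update_self]
    have c2 : margin P (A2 ∪ B3 ∪ B4 ∪ {e}) (Function.update p e b)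
        = margin P (A2 ∪ B3 ∪ B4 ∪ {e}) (Function.update q e b) := by
      apply margin_congr
      intro i hi
      rcases Finset.mem_union.mp hi with hX | hE
      · have hne : i ≠ e := hX1ne i (subG1 hX)
        rw [Function.update_of_ne hne, Function.update_of_ne hne]
        exact hpq i (subG1 hX)
      · rw [Finset.mem_singleton.mp hE, Function.update_self, Function.update_self]
    rw [c1, c2]
  have claim2 : ∀ p q : ι → Bool, (∀ i ∈ (A1 ∪ A3 ∪ B2 ∪ B4 : Finset ι), p i = q i) → u p = u q := by
    intro p q hpq
    have hp : u p = u (Function.update p e (!b)) := by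
      simp only [hu_def]
      rw [margin_congr P (A1 ∪ ((A2 ∪ A3 ∪ A4) ∪ (B2 ∪ B3 ∪ B4) ∪ B1)) (fun i hi => (Function.update_of_ne (hQ1ne i hi) (!b) p).symm),
        margin_congr P ((A2 ∪ A3 ∪ A4) ∪ (B2 ∪ B3 ∪ B4) ∪ B1) (fun i hi => (Function.update_of_ne (hRRne i hi) (!b) p).symm)]
    have hq : u q = u (Function.update q e (!b)) := by
      simp only [hu_def]
      rw [margin_congr P (A1 ∪ ((A2 ∪ A3 ∪ A4) ∪ (B2 ∪ B3 ∪ B4) ∪ B1)) (fun i hi => (Function.update_of_ne (hQ1ne i hi) (!b) q).symm),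
        margin_congr P ((A2 ∪ A3 ∪ A4) ∪ (B2 ∪ B3 ∪ B4) ∪ B1) (fun i hi => (Function.update_of_ne (hRRne i hi) (!b) q).symm)]
    rw [hp, hq, hub' _ (Function.update_self e (!b) p),
      hub' _ (Function.update_self e (!b) q)]
    have c1 : margin P (A1 ∪ A3 ∪ B2 ∪ B4 ∪ {e}) (Function.update p e (!b))
        = margin P (A1 ∪ A3 ∪ B2 ∪ B4 ∪ {e}) (Function.update q e (!b)) := by
      apply margin_congr
      intro i hi
      rcases Finset.mem_union.mp hi with hX | hE
      · have hne : i ≠ e := hX2ne i hX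
        rw [Function.update_of_ne hne, Function.update_of_ne hne]
        exact hpq i hX
      · rw [Finset.mem_singleton.mp hE, Function.update_self, Function.update_self]
    have c2 : margin P (A3 ∪ B2 ∪ B4 ∪ {e}) (Function.update p e (!b))
        = margin P (A3 ∪ B2 ∪ B4 ∪ {e}) (Function.update q e (!b)) := by
      apply margin_congr
      intro i hi
      rcases Finset.mem_union.mp hi with hX | hE
      · have hne : i ≠ e := hX2ne i (subG2 hX)
        rw [Function.update_of_ne hne, Function.update_of_ne hne]
        exact hpq i (subG2 hX)
      · rw [Finset.mem_singleton.mp hE, Function.update_self, Function.update_self]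
    rw [c1, c2]
  have hu_loc : ∀ p q : ι → Bool, (∀ i ∈ (A1 ∪ B4 : Finset ι), p i = q i) → u p = u q := by
    intro p q hpq
    have h1 : u p = u (fun i => if i ∈ (A1 ∪ A2 ∪ B3 ∪ B4 : Finset ι) then p i else q i) :=
      claim1 _ _ (fun i hi => (if_pos hi).symm)
    have h2 : u (fun i => if i ∈ (A1 ∪ A2 ∪ B3 ∪ B4 : Finset ι) then p i else q i) = u q := by
      apply claim2
      intro i hi
      rcases Finset.mem_union.mp hi with hi' | hB4
      · rcases Finset.mem_union.mp hi' with hi'' | hB2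
        · rcases Finset.mem_union.mp hi'' with hA1 | hA3
          · have hX : i ∈ (A1 ∪ A2 ∪ B3 ∪ B4 : Finset ι) :=
              Finset.mem_union_left _ (Finset.mem_union_left _ (Finset.mem_union_left _ hA1))
            simp only [if_pos hX]
            exact hpq i (Finset.mem_union_left _ hA1)
          · have hX : i ∉ (A1 ∪ A2 ∪ B3 ∪ B4 : Finset ι) := by
              have hf0 : i ∉ A1 := Finset.disjoint_right.mp d13 hA3
              have hf1 : i ∉ A2 := Finset.disjoint_right.mp d23 hA3
              have hf2 : i ∉ B3 := Finset.disjoint_left.mp d37 hA3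
              have hf3 : i ∉ B4 := Finset.disjoint_left.mp d38 hA3
              simp only [Finset.mem_union]
              itauto
            simp only [if_neg hX]
        · have hX : i ∉ (A1 ∪ A2 ∪ B3 ∪ B4 : Finset ι) := by
            have hf0 : i ∉ A1 := Finset.disjoint_right.mp d16 hB2
            have hf1 : i ∉ A2 := Finset.disjoint_right.mp d26 hB2
            have hf2 : i ∉ B3 := Finset.disjoint_left.mp d67 hB2
            have hf3 : i ∉ B4 := Finset.disjoint_left.mp d68 hB2
            simp only [Finset.mem_union]
            itauto
          simp only [if_neg hX]
      · have hX : i ∈ (A1 ∪ A2 ∪ B3 ∪ B4 : Finset ι) := Finset.mem_union_right _ hB4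
        simp only [if_pos hX]
        exact hpq i (Finset.mem_union_right _ hB4)
    exact h1.trans h2
  have hF : ∀ s : ι → Bool, margin P (A1 ∪ ((A2 ∪ A3 ∪ A4) ∪ B4)) s = u s * margin P ((A2 ∪ A3 ∪ A4) ∪ B4) s := by
    intro s
    have h := margin_transfer P (A1 ∪ ((A2 ∪ A3 ∪ A4) ∪ B4)) (A1 ∪ ((A2 ∪ A3 ∪ A4) ∪ (B2 ∪ B3 ∪ B4) ∪ B1)) ((A2 ∪ A3 ∪ A4) ∪ (B2 ∪ B3 ∪ B4) ∪ B1) s (u s) ?_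
    · rw [id8, id9, id10, id11] at h
      rw [mul_left_comm] at h
      exact mul_left_cancel₀ (pow_ne_zero _ two_ne_zero) h
    · intro ω hω
      rw [← hueq ω, hu_loc ω s (fun i hi => hω i (sub3 hi))]
  have hI1' : ∀ s : ι → Bool,
      margin P ((A1 ∪ A2 ∪ A3 ∪ A4) ∪ (B1 ∪ B2 ∪ B3 ∪ B4)) s = margin P (A1 ∪ A2 ∪ A3 ∪ A4) s * margin P (B1 ∪ B2 ∪ B3 ∪ B4) s := by
    intro s
    have h := I1 s
    rw [Finset.union_empty, Finset.union_empty, Finset.union_empty,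
      margin_empty P hsum, mul_one] at h
    exact h
  have hG1 : ∀ s : ι → Bool,
      margin P ((A2 ∪ A3 ∪ A4) ∪ (B1 ∪ B2 ∪ B3 ∪ B4)) s = margin P (B1 ∪ B2 ∪ B3 ∪ B4) s * margin P (A2 ∪ A3 ∪ A4) s := by
    intro s
    have h := margin_transfer P ((A2 ∪ A3 ∪ A4) ∪ (B1 ∪ B2 ∪ B3 ∪ B4)) ((A1 ∪ A2 ∪ A3 ∪ A4) ∪ (B1 ∪ B2 ∪ B3 ∪ B4)) (A1 ∪ A2 ∪ A3 ∪ A4) s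
        (margin P (B1 ∪ B2 ∪ B3 ∪ B4) s) ?_
    · rw [id12, id13, id14, id15] at h
      rw [mul_left_comm] at h
      exact mul_left_cancel₀ (pow_ne_zero _ two_ne_zero) h
    · intro ω hω
      have hc : margin P (B1 ∪ B2 ∪ B3 ∪ B4) ω = margin P (B1 ∪ B2 ∪ B3 ∪ B4) s :=
        margin_congr _ _ (fun i hi => hω i (Finset.mem_union_right _ hi))
      rw [hI1' ω, hc]
      ring
  have hG2 : ∀ s : ι → Bool,
      margin P ((A2 ∪ A3 ∪ A4) ∪ B4) s = margin P (A2 ∪ A3 ∪ A4) s * margin P B4 s := by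
    intro s
    have h := margin_transfer P ((A2 ∪ A3 ∪ A4) ∪ B4) ((A2 ∪ A3 ∪ A4) ∪ (B1 ∪ B2 ∪ B3 ∪ B4)) (B1 ∪ B2 ∪ B3 ∪ B4) s
        (margin P (A2 ∪ A3 ∪ A4) s) ?_
    · rw [id16, id17, id18, id19] at h
      rw [mul_left_comm] at h
      exact mul_left_cancel₀ (pow_ne_zero _ two_ne_zero) h
    · intro ω hω
      have hc : margin P (A2 ∪ A3 ∪ A4) ω = margin P (A2 ∪ A3 ∪ A4) s :=
        margin_congr _ _ (fun i hi => hω i (Finset.mem_union_left _ hi))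
      rw [hG1 ω, hc]
      ring
  set W : (ι → Bool) → ℝ := fun t => ∑ ω : ι → Bool,
      if ∀ i ∈ (A1 ∪ (A2 ∪ A3 ∪ A4) : Finset ι), ω i = t i then u ω * margin P B4 ω else 0 with hW_def
  have hW1 : ∀ s : ι → Bool,
      (2:ℝ) ^ ((A1 ∪ ((A2 ∪ A3 ∪ A4) ∪ B4))ᶜ.card) * margin P (A1 ∪ (A2 ∪ A3 ∪ A4)) s = margin P (A2 ∪ A3 ∪ A4) s * W s := by
    intro s
    have h := margin_marg P (A1 ∪ (A2 ∪ A3 ∪ A4)) (A1 ∪ ((A2 ∪ A3 ∪ A4) ∪ B4)) s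
    rw [id20, id21] at h
    rw [← h]
    calc (∑ ω : ι → Bool, if ∀ i ∈ (A1 ∪ (A2 ∪ A3 ∪ A4) : Finset ι), ω i = s i
            then margin P (A1 ∪ ((A2 ∪ A3 ∪ A4) ∪ B4)) ω else 0)
        = ∑ ω : ι → Bool, if ∀ i ∈ (A1 ∪ (A2 ∪ A3 ∪ A4) : Finset ι), ω i = s i
            then margin P (A2 ∪ A3 ∪ A4) s * (u ω * margin P B4 ω) else 0 := by
          refine sum_sub _ _ (fun ω hω => ?_)
          rw [hF ω, hG2 ω,
            margin_congr P (A2 ∪ A3 ∪ A4) (fun i hi => hω i (Finset.mem_union_right _ hi))]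
          ring
      _ = margin P (A2 ∪ A3 ∪ A4) s * W s := by
          simp only [hW_def]
          exact sum_ite_const_mul _ _ _ _
  have hW2 : ∀ p q : ι → Bool, (∀ i ∈ A1, p i = q i) → W p = W q := by
    intro p q hpq
    simp only [hW_def]
    rw [← Finset.sum_filter, ← Finset.sum_filter]
    refine Finset.sum_nbij' (fun ω => fun j => if j ∈ (A2 ∪ A3 ∪ A4 : Finset ι) then q j else ω j)
      (fun ω => fun j => if j ∈ (A2 ∪ A3 ∪ A4 : Finset ι) then p j else ω j) ?_ ?_ ?_ ?_ ?_
    · intro ω hω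
      simp only [Finset.mem_filter, Finset.mem_univ, true_and] at hω ⊢
      intro i hi
      by_cases hC : i ∈ (A2 ∪ A3 ∪ A4 : Finset ι)
      · rw [if_pos hC]
      · rw [if_neg hC]
        rcases Finset.mem_union.mp hi with hA | hC2
        · exact (hω i hi).trans (hpq i hA)
        · exact absurd hC2 hC
    · intro ω hω
      simp only [Finset.mem_filter, Finset.mem_univ, true_and] at hω ⊢
      intro i hi
      by_cases hC : i ∈ (A2 ∪ A3 ∪ A4 : Finset ι)
      · rw [if_pos hC]
      · rw [if_neg hC]
        rcases Finset.mem_union.mp hi with hA | hC2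
        · exact (hω i hi).trans (hpq i hA).symm
        · exact absurd hC2 hC
    · intro ω hω
      simp only [Finset.mem_filter, Finset.mem_univ, true_and] at hω
      funext j
      by_cases hC : j ∈ (A2 ∪ A3 ∪ A4 : Finset ι)
      · simp only [if_pos hC]
        exact (hω j (Finset.mem_union_right _ hC)).symm
      · simp only [if_neg hC]
    · intro ω hω
      simp only [Finset.mem_filter, Finset.mem_univ, true_and] at hω
      funext j
      by_cases hC : j ∈ (A2 ∪ A3 ∪ A4 : Finset ι)
      · simp only [if_pos hC]
        exact (hω j (Finset.mem_union_right _ hC)).symm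
      · simp only [if_neg hC]
    · intro ω hω
      simp only [Finset.mem_filter, Finset.mem_univ, true_and] at hω
      have h1 : u ω = u (fun j => if j ∈ (A2 ∪ A3 ∪ A4 : Finset ι) then q j else ω j) :=
        hu_loc _ _ (fun i hi => (if_neg (hnotC i hi)).symm)
      have h2 : margin P B4 ω = margin P B4 (fun j => if j ∈ (A2 ∪ A3 ∪ A4 : Finset ι) then q j else ω j) :=
        margin_congr _ _ (fun i hi => (if_neg (hnotC i (Finset.mem_union_right _ hi))).symm)
      rw [h1, h2]
  have hW3 : ∀ s : ι → Bool, W s = (2:ℝ) ^ ((A1 ∪ ((A2 ∪ A3 ∪ A4) ∪ B4))ᶜ.card) * margin P A1 s := by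
    intro s
    have h := margin_marg P A1 (A1 ∪ (A2 ∪ A3 ∪ A4)) s
    rw [id22, id23] at h
    have key : (2:ℝ) ^ ((A1 ∪ ((A2 ∪ A3 ∪ A4) ∪ B4))ᶜ.card) * ((2:ℝ) ^ ((A1 ∪ (A2 ∪ A3 ∪ A4))ᶜ.card) * margin P A1 s)
        = W s * (2:ℝ) ^ ((A1 ∪ (A2 ∪ A3 ∪ A4))ᶜ.card) := by
      calc (2:ℝ) ^ ((A1 ∪ ((A2 ∪ A3 ∪ A4) ∪ B4))ᶜ.card) * ((2:ℝ) ^ ((A1 ∪ (A2 ∪ A3 ∪ A4))ᶜ.card) * margin P A1 s)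
          = (2:ℝ) ^ ((A1 ∪ ((A2 ∪ A3 ∪ A4) ∪ B4))ᶜ.card) * (∑ ω : ι → Bool, if ∀ i ∈ A1, ω i = s i
              then margin P (A1 ∪ (A2 ∪ A3 ∪ A4)) ω else 0) := by rw [h]
        _ = ∑ ω : ι → Bool, if ∀ i ∈ A1, ω i = s i
              then (2:ℝ) ^ ((A1 ∪ ((A2 ∪ A3 ∪ A4) ∪ B4))ᶜ.card) * margin P (A1 ∪ (A2 ∪ A3 ∪ A4)) ω else 0 :=
            (sum_ite_const_mul _ _ _ _).symm
        _ = ∑ ω : ι → Bool, if ∀ i ∈ A1, ω i = s i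
              then W s * margin P (A2 ∪ A3 ∪ A4) ω else 0 := by
            refine sum_sub _ _ (fun ω hω => ?_)
            linear_combination (hW1 ω) + margin P (A2 ∪ A3 ∪ A4) ω * (hW2 ω s (fun i hi => hω i hi))
        _ = W s * ∑ ω : ι → Bool, (if ∀ i ∈ A1, ω i = s i
              then margin P (A2 ∪ A3 ∪ A4) ω else 0) := sum_ite_const_mul _ _ _ _
        _ = W s * ((2:ℝ) ^ ((A1 ∪ (A2 ∪ A3 ∪ A4))ᶜ.card) * margin P (A1 ∩ (A2 ∪ A3 ∪ A4)) s) := by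
            rw [margin_marg P A1 (A2 ∪ A3 ∪ A4) s]
        _ = W s * (2:ℝ) ^ ((A1 ∪ (A2 ∪ A3 ∪ A4))ᶜ.card) := by
            rw [id24, margin_empty P hsum, mul_one]
    have key2 : ((2:ℝ) ^ ((A1 ∪ ((A2 ∪ A3 ∪ A4) ∪ B4))ᶜ.card) * margin P A1 s) * (2:ℝ) ^ ((A1 ∪ (A2 ∪ A3 ∪ A4))ᶜ.card)
        = W s * (2:ℝ) ^ ((A1 ∪ (A2 ∪ A3 ∪ A4))ᶜ.card) := by linear_combination key
    exact (mul_right_cancel₀ (pow_ne_zero _ two_ne_zero) key2).symm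
  have hMain : ∀ s : ι → Bool,
      margin P (A1 ∪ (A2 ∪ A3 ∪ A4)) s = margin P A1 s * margin P (A2 ∪ A3 ∪ A4) s := by
    intro s
    have h := hW1 s
    rw [hW3 s, mul_left_comm] at h
    exact (mul_left_cancel₀ (pow_ne_zero _ two_ne_zero) h).trans (mul_comm _ _)
  have hFinal : ∀ T' : Finset ι, T' ⊆ (A2 ∪ A3 ∪ A4) → ∀ s : ι → Bool,
      margin P (A1 ∪ T') s = margin P A1 s * margin P T' s := by
    intro T' hT' s
    have hsubU : A1 ∪ T' ⊆ A1 ∪ (A2 ∪ A3 ∪ A4) :=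
      Finset.union_subset Finset.subset_union_left (hT'.trans Finset.subset_union_right)
    have f1 : (A1 ∪ T') ∪ (A1 ∪ (A2 ∪ A3 ∪ A4)) = A1 ∪ (A2 ∪ A3 ∪ A4) := Finset.union_eq_right.mpr hsubU
    have f2 : (A1 ∪ T') ∩ (A1 ∪ (A2 ∪ A3 ∪ A4)) = A1 ∪ T' := Finset.inter_eq_left.mpr hsubU
    have f3 : (A1 ∪ T') ∪ (A2 ∪ A3 ∪ A4) = A1 ∪ (A2 ∪ A3 ∪ A4) := by
      rw [Finset.union_assoc, Finset.union_eq_right.mpr hT']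
    have f4 : (A1 ∪ T') ∩ (A2 ∪ A3 ∪ A4) = T' := by
      rw [Finset.union_inter_distrib_right, id24, Finset.empty_union,
        Finset.inter_eq_left.mpr hT']
    have h := margin_transfer P (A1 ∪ T') (A1 ∪ (A2 ∪ A3 ∪ A4)) (A2 ∪ A3 ∪ A4) s (margin P A1 s) ?_
    · rw [f1, f2, f3, f4] at h
      rw [mul_left_comm] at h
      exact mul_left_cancel₀ (pow_ne_zero _ two_ne_zero) h
    · intro ω hω
      rw [hMain ω, margin_congr P A1 (fun i hi => hω i (Finset.mem_union_left _ hi))]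
  have sub23 : (A2 ∪ A3 : Finset ι) ⊆ (A2 ∪ A3 ∪ A4) := Finset.subset_union_left
  have subA2 : (A2 : Finset ι) ⊆ (A2 ∪ A3 ∪ A4) :=
    Finset.subset_union_left.trans Finset.subset_union_left
  have mrw : ∀ {S T : Finset ι}, S = T → ∀ s : ι → Bool, margin P S s = margin P T s :=
    fun h s => by rw [h]
  refine ⟨?_, ?_, ?_⟩
  · intro s
    rw [mrw idg1 s, mrw idg2 s, hMain s, hFinal (A2 ∪ A3) sub23 s]
    ring
  · intro s
    rw [mrw idg3 s, mrw idg4 s, hFinal (A2 ∪ A3) sub23 s, hFinal A2 subA2 s]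
    ring
  · intro s
    simp only [Finset.union_empty]
    rw [margin_empty P hsum, hFinal A2 subA2 s]
    ring
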